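/- arXiv:1612.00068 — 3 statements merged into one kernel-verified Lean document; each statement's English description precedes it below -/
import Mathlib

section
/- Let D ⊆ ℝ be a bounded interval of diameter diam(D) > 0 and m : D → ℝ be twice weakly differentiable with J(m)² := ∫_D |m''(t)|² dt < ∞ and ‖m‖_∞ ≤ M. Then ‖m'‖_∞ ≤ 2M/diam(D) + (1 + J(m))·diam(D)^{1/2}. -/
open MeasureTheory

set_option maxHeartbeats 1600000 in
/-- If `m` is bounded by `M` on a bounded interval `D` of positive diameter and has
roughness `J(m) = (∫_D |m''|²)^{1/2}`, then
`‖m'‖_∞ ≤ 2M/diam(D) + (1 + J(m)) diam(D)^{1/2}`. -/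
theorem stmt1 (D : Set ℝ) (hD : D.OrdConnected) (hDb : Bornology.IsBounded D)
    (hdiam : 0 < Metric.diam D)
    (m m' m'' : ℝ → ℝ)
    (hm' : ∀ t ∈ D, HasDerivAt m (m' t) t)
    (hm'' : ∀ t ∈ D, HasDerivAt m' (m'' t) t)
    (hmeas : Measurable m'')
    (hint : IntegrableOn (fun t => (m'' t) ^ 2) D)
    (J : ℝ) (hJ : 0 ≤ J)
    (hJ2 : ∫ t in D, (m'' t) ^ 2 = J ^ 2)
    (M : ℝ) (hM : ∀ t ∈ D, |m t| ≤ M) :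
    ∀ t ∈ D, |m' t| ≤ 2 * M / Metric.diam D + (1 + J) * (Metric.diam D) ^ ((1 : ℝ) / 2) := by
  intro t ht
  set L := Metric.diam D with hLdef
  have hM0 : 0 ≤ M := (abs_nonneg _).trans (hM t ht)
  have hSrpow : Real.sqrt L = L ^ ((1 : ℝ) / 2) := Real.sqrt_eq_rpow L
  set S := Real.sqrt L with hSdef
  have hS2 : S ^ 2 = L := Real.sq_sqrt hdiam.le
  have hSpos : 0 < S := Real.sqrt_pos.2 hdiam
  have hμ : volume D < ⊤ := hDb.measure_lt_top
  -- m'' is integrable on D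
  have hIntD : IntegrableOn m'' D := by
    have hg : IntegrableOn (fun x => ((m'' x) ^ 2 + 1) / 2) D :=
      (hint.add (integrableOn_const hμ.ne)).div_const 2
    refine hg.mono' hmeas.aestronglyMeasurable.restrict ?_
    filter_upwards with x
    rw [Real.norm_eq_abs]
    nlinarith [sq_nonneg (|m'' x| - 1), sq_abs (m'' x), abs_nonneg (m'' x)]
  have hItv : ∀ u v : ℝ, u ∈ D → v ∈ D → IntervalIntegrable m'' volume u v := by
    intro u v hu hv
    rw [intervalIntegrable_iff]
    exact hIntD.mono_set (Set.Ioc_subset_Icc_self.trans (hD.uIcc_subset hu hv))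
  have hItv2 : ∀ u v : ℝ, u ∈ D → v ∈ D →
      IntervalIntegrable (fun x => (m'' x) ^ 2) volume u v := by
    intro u v hu hv
    rw [intervalIntegrable_iff]
    exact hint.mono_set (Set.Ioc_subset_Icc_self.trans (hD.uIcc_subset hu hv))
  -- choose a, b with b - a close to L
  set δ := min (L / 2) (S * L ^ 2 / (4 * (2 * M + 1))) with hδdef
  have hδpos : 0 < δ := lt_min (by positivity) (by positivity)
  have hδle : δ ≤ L / 2 := min_le_left _ _
  have hδle2 : δ * (4 * (2 * M + 1)) ≤ S * L ^ 2 := by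
    have h := min_le_right (L / 2) (S * L ^ 2 / (4 * (2 * M + 1)))
    rw [le_div_iff₀ (by positivity)] at h
    exact h
  have hex : ∃ a ∈ D, ∃ b ∈ D, L - δ < dist a b := by
    by_contra h
    push_neg at h
    have := Metric.diam_le_of_forall_dist_le (C := L - δ) (by linarith)
      (fun x hx y hy => h x hx y hy)
    rw [← hLdef] at this
    linarith
  obtain ⟨a, ha, b, hb, hba1, hba2⟩ :
      ∃ a ∈ D, ∃ b ∈ D, L - δ < b - a ∧ b - a ≤ L := by
    obtain ⟨a₀, ha₀, b₀, hb₀, hab₀⟩ := hex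
    have hd2 : dist a₀ b₀ ≤ L := Metric.dist_le_diam_of_mem hDb ha₀ hb₀
    rcases le_total a₀ b₀ with h | h
    · refine ⟨a₀, ha₀, b₀, hb₀, ?_, ?_⟩ <;>
        rw [Real.dist_eq, abs_of_nonpos (by linarith), neg_sub] at hab₀ hd2 <;> linarith
    · refine ⟨b₀, hb₀, a₀, ha₀, ?_, ?_⟩ <;>
        rw [Real.dist_eq, abs_of_nonneg (by linarith)] at hab₀ hd2 <;> linarith
  have hab : a < b := by linarith
  have hIcc : Set.Icc a b ⊆ D := hD.out ha hb
  obtain ⟨s, hs, hms⟩ := exists_hasDerivAt_eq_slope m m' hab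
    (fun x hx => (hm' x (hIcc hx)).continuousAt.continuousWithinAt)
    (fun x hx => hm' x (hIcc (Set.Ioo_subset_Icc_self hx)))
  have hsD : s ∈ D := hIcc (Set.Ioo_subset_Icc_self hs)
  -- bound |m' s|
  have hbound1 : |m' s| ≤ 2 * M / L + S / 2 := by
    have hbapos : (0 : ℝ) < b - a := by linarith
    have h1 : |m' s| ≤ 2 * M / (b - a) := by
      rw [hms, abs_div, abs_of_pos hbapos]
      gcongr
      calc |m b - m a| ≤ |m b| + |m a| := abs_sub _ _
        _ ≤ 2 * M := by linarith [hM b hb, hM a ha]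
    refine h1.trans ?_
    rw [div_add_div _ _ (ne_of_gt hdiam) (two_ne_zero), div_le_div_iff₀ hbapos (by positivity)]
    nlinarith [mul_nonneg hM0 (sub_nonneg.2 hba2), mul_pos hSpos hdiam,
      mul_nonneg hSpos.le (mul_nonneg hdiam.le hdiam.le), mul_nonneg hδpos.le hM0]
  -- FTC
  have huIcc : Set.uIcc s t ⊆ D := hD.uIcc_subset hsD ht
  have hftc : ∫ x in s..t, m'' x = m' t - m' s :=
    intervalIntegral.integral_eq_sub_of_hasDerivAt
      (fun x hx => hm'' x (huIcc hx)) (hItv s t hsD ht)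
  set u := min s t with hudef
  set v := max s t with hvdef
  have huD : u ∈ D := by
    rcases le_total s t with h | h
    · rw [hudef, min_eq_left h]; exact hsD
    · rw [hudef, min_eq_right h]; exact ht
  have hvD : v ∈ D := by
    rcases le_total s t with h | h
    · rw [hvdef, max_eq_right h]; exact ht
    · rw [hvdef, max_eq_left h]; exact hsD
  have huv : u ≤ v := min_le_max
  have hvu : v - u ≤ L := by
    have h1 : dist s t ≤ L := Metric.dist_le_diam_of_mem hDb hsD ht
    rw [Real.dist_eq] at h1
    rcases le_total s t with h | h
    · rw [hvdef, hudef, max_eq_right h, min_eq_left h]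
      rw [abs_of_nonpos (by linarith)] at h1; linarith
    · rw [hvdef, hudef, max_eq_left h, min_eq_right h]
      rw [abs_of_nonneg (by linarith)] at h1; linarith
  have habs_eq : |∫ x in s..t, m'' x| = |∫ x in u..v, m'' x| := by
    rcases le_total s t with h | h
    · rw [hudef, hvdef, min_eq_left h, max_eq_right h]
    · rw [hudef, hvdef, min_eq_right h, max_eq_left h, intervalIntegral.integral_symm, abs_neg]
  set c := (2 * J + 1) / (2 * S) with hcdef
  have hc : 0 < c := by positivity
  have hIq : ∫ x in u..v, (m'' x) ^ 2 ≤ J ^ 2 := by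
    rw [intervalIntegral.integral_of_le huv, ← hJ2]
    refine setIntegral_mono_set hint ?_ ?_
    · filter_upwards with x using sq_nonneg _
    · exact HasSubset.Subset.eventuallyLE (Set.Ioc_subset_Icc_self.trans (hD.out huD hvD))
  have hbound2 : |∫ x in u..v, m'' x| ≤ J ^ 2 / (2 * c) + c / 2 * L := by
    have h1 : |∫ x in u..v, m'' x| ≤ ∫ x in u..v, |m'' x| :=
      intervalIntegral.abs_integral_le_integral_abs huv
    have hg : IntervalIntegrable (fun x => (m'' x) ^ 2 / (2 * c) + c / 2) volume u v :=
      ((hItv2 u v huD hvD).div_const _).add (intervalIntegrable_const)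
    have h2 : ∫ x in u..v, |m'' x| ≤ ∫ x in u..v, ((m'' x) ^ 2 / (2 * c) + c / 2) := by
      refine intervalIntegral.integral_mono_on huv ((hItv u v huD hvD).abs) hg ?_
      intro x _
      have h2c : (0 : ℝ) < 2 * c := by positivity
      have hkey : 2 * c * |m'' x| ≤ (m'' x) ^ 2 + c ^ 2 := by
        nlinarith [sq_nonneg (|m'' x| - c), sq_abs (m'' x)]
      calc |m'' x| = (2 * c * |m'' x|) / (2 * c) := by field_simp
        _ ≤ ((m'' x) ^ 2 + c ^ 2) / (2 * c) := by gcongr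
        _ = (m'' x) ^ 2 / (2 * c) + c / 2 := by field_simp
    have h3 : ∫ x in u..v, ((m'' x) ^ 2 / (2 * c) + c / 2)
        = (∫ x in u..v, (m'' x) ^ 2) / (2 * c) + (v - u) * (c / 2) := by
      rw [intervalIntegral.integral_add ((hItv2 u v huD hvD).div_const _) intervalIntegrable_const,
        intervalIntegral.integral_div, intervalIntegral.integral_const, smul_eq_mul]
    have h2c : (0 : ℝ) < 2 * c := by positivity
    have h4 : (∫ x in u..v, (m'' x) ^ 2) / (2 * c) ≤ J ^ 2 / (2 * c) :=
      div_le_div_of_nonneg_right hIq h2c.le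
    have hc2 : (0 : ℝ) ≤ c / 2 := by positivity
    have h5 : (v - u) * (c / 2) ≤ L * (c / 2) := mul_le_mul_of_nonneg_right hvu hc2
    calc |∫ x in u..v, m'' x| ≤ ∫ x in u..v, ((m'' x) ^ 2 / (2 * c) + c / 2) := h1.trans h2
      _ = (∫ x in u..v, (m'' x) ^ 2) / (2 * c) + (v - u) * (c / 2) := h3
      _ ≤ J ^ 2 / (2 * c) + c / 2 * L := by rw [mul_comm L (c/2)] at h5; linarith
  have hfinal : J ^ 2 / (2 * c) + c / 2 * L ≤ (1 / 2 + J) * S := by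
    rw [hcdef, ← hS2]
    have h2J : (0 : ℝ) < 2 * J + 1 := by linarith
    have h2J : (0 : ℝ) < 2 * J + 1 := by linarith
    have e1 : J ^ 2 / (2 * ((2 * J + 1) / (2 * S))) = J ^ 2 * S / (2 * J + 1) := by
      field_simp
    have e2 : (2 * J + 1) / (2 * S) / 2 * S ^ 2 = (2 * J + 1) * S / 4 := by
      field_simp; ring
    rw [e1, e2, div_add_div _ _ (ne_of_gt h2J) (by norm_num : (4 : ℝ) ≠ 0),
      div_le_iff₀ (by positivity)]
    nlinarith [mul_pos hSpos h2J, sq_nonneg J, mul_nonneg (mul_nonneg hSpos.le hJ) hJ]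
  have htri : |m' t| ≤ |m' s| + |∫ x in s..t, m'' x| := by
    have heq : m' t = m' s + (∫ x in s..t, m'' x) := by rw [hftc]; ring
    calc |m' t| = |m' s + (∫ x in s..t, m'' x)| := by rw [← heq]
      _ ≤ |m' s| + |∫ x in s..t, m'' x| := abs_add_le _ _
  rw [← hSrpow]
  rw [habs_eq] at htri
  linarith [hbound1, hbound2, hfinal, htri]
end

section
/- Let θ₀, η, β ∈ S^{d−1} with |η − θ₀| ≤ 1/2 and |β − θ₀| ≤ 1/2, η ≠ θ₀, β ≠ θ₀, and suppose θ₀ᵀη ≠ 1 and θ₀ᵀβ ≠ 1. Define η_p := (θ₀ − η(θ₀ᵀη))/|θ₀ − η(θ₀ᵀη)| and β_p analogously. Then |η_p − β_p| ≤ (16/√15)·|η − β| / (|η − θ₀| + |β − θ₀|). -/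
open scoped RealInnerProductSpace

/-!
Write `u = θ₀ - ⟪θ₀, η⟫ • η` and `v = θ₀ - ⟪θ₀, β⟫ • β`, so that `η_p` and `β_p` are the radial
projections of `u` and `v`. In an inner product space the radial projection satisfies
`‖u/‖u‖ - v/‖v‖‖ ≤ 2‖u - v‖/(‖u‖ + ‖v‖)`; here `‖u - v‖ ≤ 2‖η - β‖`, and for unit vectors
`‖u‖² = ‖η - θ₀‖² (1 - ‖η - θ₀‖²/4) ≥ (15/16) ‖η - θ₀‖²` as long as `‖η - θ₀‖ ≤ 1/2`.
-/

section InnerProductSpace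

variable {E : Type*} [NormedAddCommGroup E] [InnerProductSpace ℝ E]

theorem norm_inv_norm_smul_sub_inv_norm_smul_le {u v : E} (hu : u ≠ 0) (hv : v ≠ 0) :
    ‖‖u‖⁻¹ • u - ‖v‖⁻¹ • v‖ ≤ 2 * ‖u - v‖ / (‖u‖ + ‖v‖) := by
  set a := ‖u‖
  set b := ‖v‖
  set w := a⁻¹ • u - b⁻¹ • v
  have ha : 0 < a := norm_pos_iff.mpr hu
  have hb : 0 < b := norm_pos_iff.mpr hv
  set s := a * b - ⟪u, v⟫
  have hs : s ≤ 2 * (a * b) := by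
    linarith [neg_le_of_abs_le (abs_real_inner_le_norm u v)]
  have hu1 : ‖a⁻¹ • u‖ = 1 := by rw [norm_smul, norm_inv, norm_norm, inv_mul_cancel₀ ha.ne']
  have hv1 : ‖b⁻¹ • v‖ = 1 := by rw [norm_smul, norm_inv, norm_norm, inv_mul_cancel₀ hb.ne']
  have hw : ‖w‖ ^ 2 * (a * b) = 2 * s := by
    rw [norm_sub_sq_real, hu1, hv1, real_inner_smul_left, real_inner_smul_right]
    field_simp
    ring
  have huv : ‖u - v‖ ^ 2 = (a - b) ^ 2 + 2 * s := by
    rw [norm_sub_sq_real]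
    ring
  -- after multiplying by `ab`, the claim reduces to `s (a - b)² ≤ 2ab (a - b)²`
  have key : (‖w‖ * (a + b)) ^ 2 * (a * b) ≤ (2 * ‖u - v‖) ^ 2 * (a * b) := by
    have hsq : (‖w‖ * (a + b)) ^ 2 * (a * b) = 2 * s * (a - b) ^ 2 + 8 * (a * b) * s := by
      rw [mul_pow, mul_right_comm, hw]
      ring
    rw [hsq, mul_pow, huv]
    nlinarith [mul_le_mul_of_nonneg_right hs (sq_nonneg (a - b))]
  rw [le_div_iff₀ (by positivity)]
  exact (pow_le_pow_iff_left₀ (by positivity) (by positivity) two_ne_zero).mp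
    (le_of_mul_le_mul_right key (mul_pos ha hb))

theorem norm_inner_smul_sub_inner_smul_le {x y z : E} (hx : ‖x‖ ≤ 1) (hy : ‖y‖ ≤ 1)
    (hz : ‖z‖ ≤ 1) : ‖⟪x, y⟫ • y - ⟪x, z⟫ • z‖ ≤ 2 * ‖y - z‖ := by
  have hxy : |⟪x, y⟫| ≤ 1 :=
    (abs_real_inner_le_norm x y).trans (mul_le_one₀ hx (norm_nonneg y) hy)
  have hxyz : |⟪x, y - z⟫| ≤ ‖y - z‖ :=
    (abs_real_inner_le_norm x _).trans (mul_le_of_le_one_left (norm_nonneg _) hx)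
  have hsplit : ⟪x, y⟫ • y - ⟪x, z⟫ • z = ⟪x, y⟫ • (y - z) + ⟪x, y - z⟫ • z := by
    rw [inner_sub_right]
    module
  calc ‖⟪x, y⟫ • y - ⟪x, z⟫ • z‖
      ≤ |⟪x, y⟫| * ‖y - z‖ + |⟪x, y - z⟫| * ‖z‖ := by
        rw [hsplit]
        exact (norm_add_le _ _).trans_eq (by rw [norm_smul, norm_smul, Real.norm_eq_abs,
          Real.norm_eq_abs])
    _ ≤ 1 * ‖y - z‖ + ‖y - z‖ * 1 := by gcongr
    _ = 2 * ‖y - z‖ := by ring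

theorem norm_sub_inner_smul_sq_of_norm_eq_one {x y : E} (hx : ‖x‖ = 1) (hy : ‖y‖ = 1) :
    ‖x - ⟪x, y⟫ • y‖ ^ 2 = ‖y - x‖ ^ 2 * (1 - ‖y - x‖ ^ 2 / 4) := by
  rw [norm_sub_sq_real x, norm_sub_sq_real y, real_inner_smul_right, norm_smul,
    Real.norm_eq_abs, mul_pow, sq_abs, real_inner_comm, hx, hy]
  ring

theorem sqrt_fifteen_div_four_mul_le_norm_sub_inner_smul {x y : E} (hx : ‖x‖ = 1)
    (hy : ‖y‖ = 1) (hxy : ‖y - x‖ ≤ 1 / 2) :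
    √15 / 4 * ‖y - x‖ ≤ ‖x - ⟪x, y⟫ • y‖ := by
  refine (pow_le_pow_iff_left₀ (by positivity) (norm_nonneg _) two_ne_zero).mp ?_
  have h15 : √15 ^ 2 = 15 := Real.sq_sqrt (by norm_num)
  have hsq : ‖y - x‖ ^ 2 ≤ 1 / 4 := by nlinarith [norm_nonneg (y - x)]
  rw [norm_sub_inner_smul_sq_of_norm_eq_one hx hy, mul_pow, div_pow, h15]
  nlinarith [sq_nonneg ‖y - x‖]

end InnerProductSpace

theorem stmt11_general {d : ℕ} (θ₀ η β : EuclideanSpace ℝ (Fin d))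
    (h₀ : ‖θ₀‖ = 1) (hη : ‖η‖ = 1) (hβ : ‖β‖ = 1)
    (hηc : ‖η - θ₀‖ ≤ 1 / 2) (hβc : ‖β - θ₀‖ ≤ 1 / 2)
    (hη₀ : η ≠ θ₀) (hβ₀ : β ≠ θ₀) :
    ‖‖θ₀ - ⟪θ₀, η⟫ • η‖⁻¹ • (θ₀ - ⟪θ₀, η⟫ • η)
        - ‖θ₀ - ⟪θ₀, β⟫ • β‖⁻¹ • (θ₀ - ⟪θ₀, β⟫ • β)‖
      ≤ (16 / Real.sqrt 15) * ‖η - β‖ / (‖η - θ₀‖ + ‖β - θ₀‖) := by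
  set u := θ₀ - ⟪θ₀, η⟫ • η
  set v := θ₀ - ⟪θ₀, β⟫ • β
  have hp : 0 < ‖η - θ₀‖ := norm_pos_iff.mpr (sub_ne_zero.mpr hη₀)
  have hq : 0 < ‖β - θ₀‖ := norm_pos_iff.mpr (sub_ne_zero.mpr hβ₀)
  have hu := sqrt_fifteen_div_four_mul_le_norm_sub_inner_smul h₀ hη hηc
  have hv := sqrt_fifteen_div_four_mul_le_norm_sub_inner_smul h₀ hβ hβc
  have huv : ‖u - v‖ ≤ 2 * ‖η - β‖ := by
    rw [sub_sub_sub_cancel_left, norm_sub_rev η β]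
    exact norm_inner_smul_sub_inner_smul_le h₀.le hβ.le hη.le
  calc ‖‖u‖⁻¹ • u - ‖v‖⁻¹ • v‖
      ≤ 2 * ‖u - v‖ / (‖u‖ + ‖v‖) :=
        norm_inv_norm_smul_sub_inv_norm_smul_le
          (norm_pos_iff.mp (lt_of_lt_of_le (by positivity) hu))
          (norm_pos_iff.mp (lt_of_lt_of_le (by positivity) hv))
    _ ≤ 2 * (2 * ‖η - β‖) / (√15 / 4 * (‖η - θ₀‖ + ‖β - θ₀‖)) := by
        gcongr
        linarith
    _ = 16 / √15 * ‖η - β‖ / (‖η - θ₀‖ + ‖β - θ₀‖) := by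
        field_simp
        ring

/-- Lipschitz estimate for the map `θ ↦ θ_p := (θ₀ - (θ₀ᵀθ)θ)/|θ₀ - (θ₀ᵀθ)θ|` near `θ₀`:
`|η_p - β_p| ≤ (16/√15)|η - β|/(|η - θ₀| + |β - θ₀|)`. -/
theorem stmt11 {d : ℕ} (θ₀ η β : EuclideanSpace ℝ (Fin d))
    (h₀ : ‖θ₀‖ = 1) (hη : ‖η‖ = 1) (hβ : ‖β‖ = 1)
    (hηc : ‖η - θ₀‖ ≤ 1 / 2) (hβc : ‖β - θ₀‖ ≤ 1 / 2)
    (hη₀ : η ≠ θ₀) (hβ₀ : β ≠ θ₀)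
    (hη1 : ⟪θ₀, η⟫ ≠ 1) (hβ1 : ⟪θ₀, β⟫ ≠ 1) :
    ‖‖θ₀ - ⟪θ₀, η⟫ • η‖⁻¹ • (θ₀ - ⟪θ₀, η⟫ • η)
        - ‖θ₀ - ⟪θ₀, β⟫ • β‖⁻¹ • (θ₀ - ⟪θ₀, β⟫ • β)‖
      ≤ (16 / Real.sqrt 15) * ‖η - β‖ / (‖η - θ₀‖ + ‖β - θ₀‖) :=
  stmt11_general θ₀ η β h₀ hη hβ hηc hβc hη₀ hβ₀
end

section
/- Let 𝒳 ⊂ ℝ^d be bounded with sup_{x∈𝒳}|x| ≤ T, and let m : ℝ → ℝ be differentiable with absolutely continuous derivative and J(m) < ∞, and m₀ differentiable. Then for any unit vectors θ, θ₀ ∈ S^{d−1} and any x ∈ 𝒳, |m(θᵀx) − m(θ₀ᵀx) − m₀'(θ₀ᵀx)·xᵀ(θ−θ₀)|² ≤ 2T²|θ−θ₀|²·(|m'(θ₀ᵀx) − m₀'(θ₀ᵀx)|² + J(m)²·T·|θ−θ₀|). -/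
open MeasureTheory
open scoped RealInnerProductSpace

private lemma holder_half {m' m'' : ℝ → ℝ}
    (hm'' : ∀ t, HasDerivAt m' (m'' t) t)
    (hmeas : Measurable m'')
    (hint : Integrable (fun t => (m'' t) ^ 2))
    {J : ℝ} (hJ0 : 0 ≤ J) (hJ : ∫ t, (m'' t) ^ 2 = J ^ 2)
    (a ξ : ℝ) : (m' ξ - m' a) ^ 2 ≤ J ^ 2 * |ξ - a| := by
  set s : Set ℝ := Set.uIoc a ξ with hs
  have hsm : MeasurableSet s := measurableSet_uIoc
  have hvol : volume s = ENNReal.ofReal |ξ - a| := by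
    rw [hs, Set.uIoc, Real.volume_Ioc, max_sub_min_eq_abs, abs_sub_comm]
  have hfin : IsFiniteMeasure (volume.restrict s) := by
    constructor
    rw [Measure.restrict_apply_univ, hvol]
    exact ENNReal.ofReal_lt_top
  -- integrability of m'' on s
  have hintOn : IntegrableOn m'' s := by
    have h1 : Integrable (fun t => (m'' t) ^ 2 + 1) (volume.restrict s) :=
      ((hint.restrict (s := s))).add (integrable_const 1)
    refine h1.mono' (hmeas.aestronglyMeasurable.restrict) ?_
    filter_upwards with t
    rw [Real.norm_eq_abs]
    nlinarith [sq_nonneg (|m'' t| - 1), abs_nonneg (m'' t), sq_abs (m'' t)]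
  have hii : IntervalIntegrable m'' volume a ξ := by
    rw [intervalIntegrable_iff]; exact hintOn
  -- FTC
  have hftc : m' ξ - m' a = ∫ t in a..ξ, m'' t := by
    rw [intervalIntegral.integral_eq_sub_of_hasDerivAt (fun t _ => hm'' t) hii]
  -- Cauchy–Schwarz on s
  have habs : |m' ξ - m' a| ≤ ∫ t in s, |m'' t| := by
    rw [hftc]
    calc |∫ t in a..ξ, m'' t| = ‖∫ t in a..ξ, m'' t‖ := (Real.norm_eq_abs _).symm
      _ ≤ ∫ t in Set.uIoc a ξ, ‖m'' t‖ :=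
          intervalIntegral.norm_integral_le_integral_norm_uIoc
      _ = ∫ t in s, |m'' t| := by simp [Real.norm_eq_abs, hs]
  have hmemf : MemLp (fun t => |m'' t|) 2 (volume.restrict s) := by
    have : MemLp (fun t => |m'' t|) 2 volume := by
      rw [memLp_two_iff_integrable_sq (hmeas.abs.aestronglyMeasurable)]
      apply hint.congr
      filter_upwards with t using (sq_abs (m'' t)).symm
    exact this.restrict s
  have hmemg : MemLp (fun _ : ℝ => (1 : ℝ)) 2 (volume.restrict s) := memLp_const 1
  have hcs : ∫ t in s, |m'' t| ≤
      (∫ t in s, |m'' t| ^ 2) ^ ((1:ℝ)/2) * ((volume s).toReal) ^ ((1:ℝ)/2) := by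
    have := integral_mul_le_Lp_mul_Lq_of_nonneg (Real.holderConjugate_iff_eq_conjExponent
        (by norm_num) |>.2 (by norm_num) : Real.HolderConjugate 2 2)
      (Filter.Eventually.of_forall fun t => abs_nonneg (m'' t))
      (Filter.Eventually.of_forall fun _ => zero_le_one)
      (by simpa using hmemf) (by simpa using hmemg)
    simpa [Real.rpow_natCast, Measure.real] using this
  have hsq : ∫ t in s, |m'' t| ^ 2 ≤ J ^ 2 := by
    rw [← hJ]
    have heq : ∫ t in s, |m'' t| ^ 2 = ∫ t in s, (m'' t) ^ 2 := by
      apply setIntegral_congr_fun hsm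
      intro t _
      simp [sq_abs]
    rw [heq]
    exact setIntegral_le_integral hint
      (Filter.Eventually.of_forall fun t => sq_nonneg _)
  have hone : (volume s).toReal = |ξ - a| := by
    rw [hvol, ENNReal.toReal_ofReal (abs_nonneg _)]
  -- combine
  have hX : (0:ℝ) ≤ ∫ t in s, |m'' t| ^ 2 :=
    setIntegral_nonneg hsm fun t _ => sq_nonneg _
  have hI : |m' ξ - m' a| ≤ (J ^ 2) ^ ((1:ℝ)/2) * |ξ - a| ^ ((1:ℝ)/2) := by
    refine le_trans habs (le_trans hcs ?_)
    rw [hone]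
    exact mul_le_mul_of_nonneg_right
      (Real.rpow_le_rpow hX hsq (by norm_num))
      (Real.rpow_nonneg (abs_nonneg _) _)
  have h2 : ((J ^ 2) ^ ((1:ℝ)/2) * |ξ - a| ^ ((1:ℝ)/2)) ^ 2 = J ^ 2 * |ξ - a| := by
    rw [mul_pow, ← Real.rpow_natCast ((J^2) ^ ((1:ℝ)/2)) 2,
        ← Real.rpow_natCast (|ξ - a| ^ ((1:ℝ)/2)) 2,
        ← Real.rpow_mul (sq_nonneg J), ← Real.rpow_mul (abs_nonneg _)]
    norm_num
  calc (m' ξ - m' a) ^ 2 = |m' ξ - m' a| ^ 2 := (sq_abs _).symm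
    _ ≤ ((J ^ 2) ^ ((1:ℝ)/2) * |ξ - a| ^ ((1:ℝ)/2)) ^ 2 := by
        apply pow_le_pow_left₀ (abs_nonneg _) hI
    _ = J ^ 2 * |ξ - a| := h2

private lemma mvt_expand {m m' : ℝ → ℝ}
    (hm' : ∀ t, HasDerivAt m (m' t) t) (a b : ℝ) (hab : a ≠ b) :
    ∃ ξ, |ξ - a| ≤ |b - a| ∧ m b - m a = m' ξ * (b - a) := by
  rcases lt_or_gt_of_ne hab with h | h
  · obtain ⟨ξ, hξ, hξeq⟩ := exists_hasDerivAt_eq_slope m m' h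
      (fun t _ => (hm' t).continuousAt.continuousWithinAt) (fun t _ => hm' t)
    refine ⟨ξ, ?_, ?_⟩
    · rw [abs_of_nonneg (by linarith [hξ.1] : (0:ℝ) ≤ ξ - a),
          abs_of_nonneg (by linarith : (0:ℝ) ≤ b - a)]
      linarith [hξ.2]
    · rw [eq_div_iff (by linarith : b - a ≠ 0)] at hξeq
      linarith [hξeq]
  · obtain ⟨ξ, hξ, hξeq⟩ := exists_hasDerivAt_eq_slope m m' h
      (fun t _ => (hm' t).continuousAt.continuousWithinAt) (fun t _ => hm' t)
    refine ⟨ξ, ?_, ?_⟩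
    · rw [abs_of_nonpos (by linarith [hξ.2] : ξ - a ≤ 0),
          abs_of_nonpos (by linarith : b - a ≤ 0)]
      linarith [hξ.1]
    · rw [eq_div_iff (by intro h; apply hab; linarith [sub_eq_zero.mp h] : a - b ≠ 0)] at hξeq
      linear_combination hξeq

/-- Quadratic expansion bound: for unit vectors `θ, θ₀` and `|x| ≤ T`,
`|m(θᵀx) - m(θ₀ᵀx) - m₀'(θ₀ᵀx) xᵀ(θ - θ₀)|²
  ≤ 2T²|θ-θ₀|² (|m'(θ₀ᵀx) - m₀'(θ₀ᵀx)|² + J(m)² T |θ-θ₀|)`. -/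
theorem stmt15 {d : ℕ} (T : ℝ)
    (m m' m'' m₀ m₀' : ℝ → ℝ)
    (hm' : ∀ t, HasDerivAt m (m' t) t)
    (hm'' : ∀ t, HasDerivAt m' (m'' t) t)
    (hm₀ : ∀ t, HasDerivAt m₀ (m₀' t) t)
    (hmeas : Measurable m'')
    (hint : Integrable (fun t => (m'' t) ^ 2))
    (J : ℝ) (hJ0 : 0 ≤ J) (hJ : ∫ t, (m'' t) ^ 2 = J ^ 2)
    (θ θ₀ : EuclideanSpace ℝ (Fin d)) (hθ : ‖θ‖ = 1) (hθ₀ : ‖θ₀‖ = 1)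
    (x : EuclideanSpace ℝ (Fin d)) (hx : ‖x‖ ≤ T) :
    |m ⟪θ, x⟫ - m ⟪θ₀, x⟫ - m₀' ⟪θ₀, x⟫ * ⟪x, θ - θ₀⟫| ^ 2
      ≤ 2 * T ^ 2 * ‖θ - θ₀‖ ^ 2 *
        (|m' ⟪θ₀, x⟫ - m₀' ⟪θ₀, x⟫| ^ 2 + J ^ 2 * T * ‖θ - θ₀‖) := by
  have hT : (0:ℝ) ≤ T := le_trans (norm_nonneg x) hx
  set a := ⟪θ₀, x⟫ with ha
  set b := ⟪θ, x⟫ with hb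
  have hba : ⟪x, θ - θ₀⟫ = b - a := by
    rw [inner_sub_right, real_inner_comm θ x, real_inner_comm θ₀ x]
  have hN : (0:ℝ) ≤ ‖θ - θ₀‖ := norm_nonneg _
  have hbaBound : |b - a| ≤ T * ‖θ - θ₀‖ := by
    rw [← hba]
    calc |⟪x, θ - θ₀⟫| ≤ ‖x‖ * ‖θ - θ₀‖ := abs_real_inner_le_norm x (θ - θ₀)
      _ ≤ T * ‖θ - θ₀‖ := mul_le_mul_of_nonneg_right hx hN
  have hRHS0 : (0:ℝ) ≤ |m' a - m₀' a| ^ 2 + J ^ 2 * T * ‖θ - θ₀‖ := by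
    have := mul_nonneg (mul_nonneg (sq_nonneg J) hT) hN
    nlinarith [sq_nonneg (|m' a - m₀' a|)]
  rw [hba]
  by_cases hab : a = b
  · rw [← hab]
    simp only [sub_self, mul_zero, abs_zero]
    have h0 : (0:ℝ) ≤ 2 * T ^ 2 * ‖θ - θ₀‖ ^ 2 :=
      mul_nonneg (mul_nonneg (by norm_num) (sq_nonneg T)) (sq_nonneg _)
    have := mul_nonneg h0 hRHS0
    simpa using this
  · obtain ⟨ξ, hξle, hξeq⟩ := mvt_expand hm' a b hab
    have key : (m' ξ - m' a) ^ 2 ≤ J ^ 2 * (T * ‖θ - θ₀‖) := by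
      calc (m' ξ - m' a) ^ 2 ≤ J ^ 2 * |ξ - a| :=
            holder_half hm'' hmeas hint hJ0 hJ a ξ
        _ ≤ J ^ 2 * (T * ‖θ - θ₀‖) :=
            mul_le_mul_of_nonneg_left (le_trans hξle hbaBound) (sq_nonneg J)
    have hE : m b - m a - m₀' a * (b - a) = (m' ξ - m₀' a) * (b - a) := by
      rw [sub_mul, ← hξeq]
    rw [hE, abs_mul, mul_pow]
    have hsplit : |m' ξ - m₀' a| ^ 2 ≤
        2 * ((m' ξ - m' a) ^ 2 + (m' a - m₀' a) ^ 2) := by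
      rw [sq_abs]
      nlinarith [sq_nonneg ((m' ξ - m' a) - (m' a - m₀' a))]
    have hba2 : |b - a| ^ 2 ≤ T ^ 2 * ‖θ - θ₀‖ ^ 2 := by
      calc |b - a| ^ 2 ≤ (T * ‖θ - θ₀‖) ^ 2 :=
            pow_le_pow_left₀ (abs_nonneg _) hbaBound 2
        _ = T ^ 2 * ‖θ - θ₀‖ ^ 2 := by ring
    have h1 : |m' ξ - m₀' a| ^ 2 ≤
        2 * ((m' a - m₀' a) ^ 2 + J ^ 2 * (T * ‖θ - θ₀‖)) := by nlinarith
    calc |m' ξ - m₀' a| ^ 2 * |b - a| ^ 2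
        ≤ (2 * ((m' a - m₀' a) ^ 2 + J ^ 2 * (T * ‖θ - θ₀‖))) * (T ^ 2 * ‖θ - θ₀‖ ^ 2) := by
          apply mul_le_mul h1 hba2 (sq_nonneg _)
          positivity
      _ = 2 * T ^ 2 * ‖θ - θ₀‖ ^ 2 * (|m' a - m₀' a| ^ 2 + J ^ 2 * T * ‖θ - θ₀‖) := by
          rw [sq_abs]; ring
end
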